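/- Let m > 1 and n > 1 be naturals, let F be an LCA over (ℤ/mℤ)^n and let A ∈ 𝕃_m^{n×n} be the matrix associated with F. Then F is NOT positively expansive if and only if there exists an integer s > 0 such that at least one of the following holds: (a) there exists υ ∈ Left(𝕊^n_m, 0) with υ ≠ 0 such that A^ℓ υ ∈ Left*(𝕊^n_m, s) for every natural ℓ > 0; (b) there exists υ ∈ Right(𝕊^n_m, 0) with υ ≠ 0 such that A^ℓ υ ∈ Right*(𝕊^n_m, −s) for every natural ℓ > 0. -/

import Mathlib

open LaurentPolynomial
open scoped Classical

/-- `𝕃 m`: Laurent polynomials over `ℤ/mℤ`. -/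
abbrev Lm (m : ℕ) := LaurentPolynomial (ZMod m)

/-- `deg⁺` of a Laurent polynomial: the max of its support (`⊥ = -∞` for `0`). -/
noncomputable def degP {m : ℕ} (α : Lm m) : WithBot ℤ := α.coeff.support.max

/-- `deg⁻` of a Laurent polynomial: the min of its support (`⊤ = +∞` for `0`). -/
noncomputable def degM {m : ℕ} (α : Lm m) : WithTop ℤ := α.coeff.support.min

/-- A monic polynomial `π(t) = α₀ + α₁ t + ⋯ + α_{n-1} t^{n-1} + tⁿ` over `𝕃 m`
is *expansive* if `α₀ ≠ 0`, `deg⁺(α₀) > 0`, `deg⁺(α₀) > deg⁺(αᵢ)`,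
`deg⁻(α₀) < 0` and `deg⁻(α₀) < deg⁻(αᵢ)` for all `1 ≤ i ≤ n-1`. -/
def ExpansivePoly {m : ℕ} (π : Polynomial (Lm m)) : Prop :=
  π.coeff 0 ≠ 0 ∧
  ((0 : WithBot ℤ) < degP (π.coeff 0) ∧
    ∀ i : ℕ, 1 ≤ i → i < π.natDegree → degP (π.coeff i) < degP (π.coeff 0)) ∧
  (degM (π.coeff 0) < (0 : WithTop ℤ) ∧
    ∀ i : ℕ, 1 ≤ i → i < π.natDegree → degM (π.coeff 0) < degM (π.coeff i))

/-- A matrix over `𝕃 m` is expansive if its characteristic polynomial is. -/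
noncomputable def ExpansiveMatrix {m n : ℕ} (A : Matrix (Fin n) (Fin n) (Lm m)) : Prop :=
  ExpansivePoly A.charpoly

/-- The Tychonoff distance on the configuration space `(ℤ → S)`. -/
noncomputable def tdist {S : Type*} (c c' : ℤ → S) : ℝ :=
  if c = c' then 0
  else (2 : ℝ) ^ (-((sInf {k : ℕ | ∃ j : ℤ, j.natAbs = k ∧ c j ≠ c' j} : ℕ) : ℤ))

/-- A map on the configuration space is positively expansive if for some `ε > 0`
any two distinct configurations are eventually `≥ ε` apart. -/
def PosExpansive {S : Type*} (F : (ℤ → S) → (ℤ → S)) : Prop :=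
  ∃ ε : ℝ, 0 < ε ∧ ∀ c c' : ℤ → S, c ≠ c' →
    ∃ ℓ : ℕ, ε ≤ tdist (F^[ℓ] c) (F^[ℓ] c')

/-- The linear CA over `(ℤ/mℤ)ⁿ` determined by a matrix `A ∈ 𝕃_m^{n×n}`:
`F_A(c)_i = ∑_{k ∈ ℤ} A⁽ᵏ⁾ · c_{i-k}` where `A⁽ᵏ⁾` is the coefficient matrix of `Xᵏ` in `A`.
The same formula gives the action of `A` on two-sided formal power series `𝕊_m^n`. -/
noncomputable def lcaFun {m n : ℕ} (A : Matrix (Fin n) (Fin n) (Lm m)) :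
    (ℤ → Fin n → ZMod m) → (ℤ → Fin n → ZMod m) :=
  fun c i a => ∑ b, Finsupp.sum (A a b).coeff (fun k coef => coef * c (i - k) b)

/-- `Left(𝕊ⁿ_m, s)`: two-sided series with `deg⁺ = s`. -/
def SLeft {V : Type*} [Zero V] (s : ℤ) : Set (ℤ → V) :=
  {υ | (∀ j : ℤ, s < j → υ j = 0) ∧ υ s ≠ 0}

/-- `Left*(𝕊ⁿ_m, s)`: two-sided series with `deg⁺ ≤ s`. -/
def SLeftStar {V : Type*} [Zero V] (s : ℤ) : Set (ℤ → V) :=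
  {υ | ∀ j : ℤ, s < j → υ j = 0}

/-- `Right(𝕊ⁿ_m, s)`: two-sided series with `deg⁻ = s`. -/
def SRight {V : Type*} [Zero V] (s : ℤ) : Set (ℤ → V) :=
  {υ | (∀ j : ℤ, j < s → υ j = 0) ∧ υ s ≠ 0}

/-- `Right*(𝕊ⁿ_m, s)`: two-sided series with `deg⁻ ≥ s`. -/
def SRightStar {V : Type*} [Zero V] (s : ℤ) : Set (ℤ → V) :=
  {υ | ∀ j : ℤ, j < s → υ j = 0}

/-- Reduction of a Laurent polynomial over `ℤ/mℤ` modulo `q` (for `q ∣ m`). -/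
noncomputable def lmod {m q : ℕ} (h : q ∣ m) (α : Lm m) : Lm q :=
  AddMonoidAlgebra.ofCoeff (Finsupp.mapRange (ZMod.castHom h (ZMod q)) (map_zero _) α.coeff)

/-- Entrywise reduction of a matrix of Laurent polynomials modulo `q`. -/
noncomputable def matMod {m q n : ℕ} (h : q ∣ m) (B : Matrix (Fin n) (Fin n) (Lm m)) :
    Matrix (Fin n) (Fin n) (Lm q) :=
  fun a b => lmod h (B a b)

/-- `deg⁺` on the field of fractions of `𝕃 p`: `deg⁺(α/β) = deg⁺(α) - deg⁺(β)`,
computed on a representation given by `IsLocalization.sec`; `deg⁺ 0 = ⊥`. -/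
noncomputable def degPF {p : ℕ} (φ : FractionRing (Lm p)) : WithBot ℤ :=
  if φ = 0 then ⊥
  else (((degP ((IsLocalization.sec (nonZeroDivisors (Lm p)) φ).1)).unbotD 0
        - (degP (((IsLocalization.sec (nonZeroDivisors (Lm p)) φ).2 : Lm p))).unbotD 0 : ℤ) : WithBot ℤ)

/-- The `(x, y)` entry (with `ℕ`-indices) of the companion matrix of a polynomial `π`
viewed as a `d × d` matrix: subdiagonal entries `1`,
last column `(-π.coeff 0, …, -π.coeff (d-1))ᵀ`, the rest `0`. -/
def companionEntry {R : Type*} [CommRing R] (d : ℕ) (π : Polynomial R) (x y : ℕ) : R :=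
  if y = d - 1 then -π.coeff x else if x = y + 1 then 1 else 0

/-- The companion matrix (as a `d × d` matrix) of a polynomial `π`. -/
def companionMatrix {R : Type*} [CommRing R] (d : ℕ) (π : Polynomial R) :
    Matrix (Fin d) (Fin d) R :=
  fun a b => companionEntry d π a b

/-- A matrix is in rational canonical form if it is block diagonal with blocks the
companion matrices of monic polynomials `π₁, …, π_s` of degree at least one with
`πᵢ ∣ πⱼ` for `i ≤ j`.  The blocks are described by the offsets `off i` of their
top-left corners. -/
def IsRCF {R : Type*} [CommRing R] {n : ℕ} (C : Matrix (Fin n) (Fin n) R) : Prop :=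
  ∃ (s : ℕ) (π : Fin s → Polynomial R) (off : Fin (s + 1) → ℕ),
    (∀ i, (π i).Monic) ∧ (∀ i, 1 ≤ (π i).natDegree) ∧
    (∀ i j, i ≤ j → π i ∣ π j) ∧
    off 0 = 0 ∧ off (Fin.last s) = n ∧
    (∀ i : Fin s, off i.succ = off i.castSucc + (π i).natDegree) ∧
    (∀ (i : Fin s) (a b : Fin n),
      off i.castSucc ≤ (a : ℕ) → (a : ℕ) < off i.succ →
      off i.castSucc ≤ (b : ℕ) → (b : ℕ) < off i.succ →
      C a b = companionEntry (π i).natDegree (π i)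
        ((a : ℕ) - off i.castSucc) ((b : ℕ) - off i.castSucc)) ∧
    (∀ a b : Fin n,
      (∀ i : Fin s, ¬(off i.castSucc ≤ (a : ℕ) ∧ (a : ℕ) < off i.succ ∧
        off i.castSucc ≤ (b : ℕ) ∧ (b : ℕ) < off i.succ)) → C a b = 0)

/-!
Two orbits are close exactly when they agree on a central window, so by linearity `F` fails
to be positively expansive iff for every window some nonzero configuration has its whole
orbit vanishing on it. For the window of half-width the radius `r` of `A`, such a
configuration splits into a part left of the window and a part right of it. One step of `F`
moves supports by at most `r` and the orbit of the sum vanishes on the window, so neither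
part's orbit ever crosses it; shifting a nonzero part so that its extreme nonzero coordinate
sits at `0` gives the `υ` of (a) or (b). Conversely, a far enough shift of such a `υ` has
its whole orbit outside any given window.
-/

section Configurations

variable {V : Type*}

theorem tdist_le_of_eq_on_window {x y : ℤ → V} (M : ℕ)
    (h : ∀ j : ℤ, j.natAbs ≤ M → x j = y j) : tdist x y ≤ (2 : ℝ) ^ (-(M : ℤ) - 1) := by
  unfold tdist
  split_ifs with hxy
  · positivity
  obtain ⟨j, hj⟩ : ∃ j, x j ≠ y j := by simpa [funext_iff] using hxy
  have hM : M + 1 ≤ sInf {k : ℕ | ∃ j : ℤ, j.natAbs = k ∧ x j ≠ y j} := by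
    refine le_csInf ⟨_, j, rfl, hj⟩ ?_
    rintro _ ⟨j', rfl, hj'⟩
    by_contra! hlt
    exact hj' (h j' (by omega))
  exact zpow_le_zpow_right₀ one_le_two (by omega)

theorem eq_on_window_of_tdist_lt {x y : ℤ → V} {M : ℕ}
    (h : tdist x y < (2 : ℝ) ^ (-(M : ℤ))) {j : ℤ} (hj : j.natAbs ≤ M) : x j = y j := by
  by_contra hne
  have hxy : x ≠ y := fun he => hne (congrFun he j)
  rw [tdist, if_neg hxy] at h
  have hinf : sInf {k : ℕ | ∃ j : ℤ, j.natAbs = k ∧ x j ≠ y j} ≤ j.natAbs :=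
    Nat.sInf_le ⟨j, rfl, hne⟩
  exact h.not_ge (zpow_le_zpow_right₀ one_le_two (by omega))

theorem not_posExpansive_iff (F : (ℤ → V) → (ℤ → V)) :
    ¬ PosExpansive F ↔ ∀ M : ℕ, ∃ c c' : ℤ → V, c ≠ c' ∧
      ∀ (ℓ : ℕ) (j : ℤ), j.natAbs ≤ M → F^[ℓ] c j = F^[ℓ] c' j := by
  simp only [PosExpansive, not_exists, not_and, not_forall, not_le]
  constructor
  · intro h M
    obtain ⟨c, c', hne, hlt⟩ := h _ (by positivity : (0 : ℝ) < 2 ^ (-(M : ℤ)))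
    exact ⟨c, c', hne, fun ℓ j hj => eq_on_window_of_tdist_lt (hlt ℓ) hj⟩
  · intro h ε hε
    obtain ⟨M, hM⟩ := exists_pow_lt_of_lt_one hε (by norm_num : (2⁻¹ : ℝ) < 1)
    obtain ⟨c, c', hne, hwin⟩ := h M
    refine ⟨c, c', hne, fun ℓ => (tdist_le_of_eq_on_window M (hwin ℓ)).trans_lt ?_⟩
    calc (2 : ℝ) ^ (-(M : ℤ) - 1) ≤ 2 ^ (-(M : ℤ)) := zpow_le_zpow_right₀ one_le_two (by omega)
      _ = 2⁻¹ ^ M := by rw [zpow_neg, zpow_natCast, inv_pow]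
      _ < ε := hM

theorem not_posExpansive_iff_exists_ne_zero {G : Type*} [AddGroup G]
    (F : (ℤ → G) →+ (ℤ → G)) :
    ¬ PosExpansive F ↔ ∀ M : ℕ, ∃ δ : ℤ → G, δ ≠ 0 ∧
      ∀ (ℓ : ℕ) (j : ℤ), j.natAbs ≤ M → (⇑F)^[ℓ] δ j = 0 := by
  rw [not_posExpansive_iff]
  refine forall_congr' fun M => ⟨?_, ?_⟩
  · rintro ⟨c, c', hne, hwin⟩
    refine ⟨c - c', sub_ne_zero.mpr hne, fun ℓ j hj => ?_⟩
    rw [iterate_map_sub, Pi.sub_apply, hwin ℓ j hj, sub_self]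
  · rintro ⟨δ, hne, hwin⟩
    exact ⟨δ, 0, hne, fun ℓ j hj => by rw [hwin ℓ j hj, iterate_map_zero, Pi.zero_apply]⟩

theorem ne_zero_of_mem_SLeft [Zero V] {s : ℤ} {υ : ℤ → V} (h : υ ∈ SLeft s) : υ ≠ 0 :=
  fun h0 => h.2 (by rw [h0, Pi.zero_apply])

theorem ne_zero_of_mem_SRight [Zero V] {s : ℤ} {υ : ℤ → V} (h : υ ∈ SRight s) : υ ≠ 0 :=
  fun h0 => h.2 (by rw [h0, Pi.zero_apply])

theorem SLeftStar_mono [Zero V] {d e : ℤ} (h : d ≤ e) :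
    (SLeftStar d : Set (ℤ → V)) ⊆ SLeftStar e :=
  fun _ hu j hj => hu j (by omega)

theorem SRightStar_mono [Zero V] {d e : ℤ} (h : e ≤ d) :
    (SRightStar d : Set (ℤ → V)) ⊆ SRightStar e :=
  fun _ hu j hj => hu j (by omega)

theorem shift_mem_SLeftStar [Zero V] {d : ℤ} {u : ℤ → V} (hu : u ∈ SLeftStar d) (t : ℤ) :
    (fun j => u (j + t)) ∈ SLeftStar (d - t) :=
  fun j hj => hu (j + t) (by omega)

theorem shift_mem_SRightStar [Zero V] {d : ℤ} {u : ℤ → V} (hu : u ∈ SRightStar d) (t : ℤ) :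
    (fun j => u (j + t)) ∈ SRightStar (d - t) :=
  fun j hj => hu (j + t) (by omega)

theorem exists_shift_mem_SLeft [Zero V] {d : ℤ} {u : ℤ → V} (hu : u ∈ SLeftStar d)
    (hne : u ≠ 0) : ∃ t ≤ d, (fun j => u (j + t)) ∈ SLeft 0 := by
  have hbdd : ∀ j, u j ≠ 0 → j ≤ d := fun j hj => by
    by_contra! hlt
    exact hj (hu j hlt)
  obtain ⟨t, ht, htop⟩ := Int.exists_greatest_of_bdd ⟨d, hbdd⟩ (by simpa [funext_iff] using hne)
  refine ⟨t, hbdd t ht, fun j hj => ?_, by simpa using ht⟩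
  by_contra hne'
  have := htop _ hne'
  omega

theorem exists_shift_mem_SRight [Zero V] {d : ℤ} {u : ℤ → V} (hu : u ∈ SRightStar d)
    (hne : u ≠ 0) : ∃ t ≥ d, (fun j => u (j + t)) ∈ SRight 0 := by
  have hbdd : ∀ j, u j ≠ 0 → d ≤ j := fun j hj => by
    by_contra! hlt
    exact hj (hu j hlt)
  obtain ⟨t, ht, hbot⟩ := Int.exists_least_of_bdd ⟨d, hbdd⟩ (by simpa [funext_iff] using hne)
  refine ⟨t, hbdd t ht, fun j hj => ?_, by simpa using ht⟩
  by_contra hne'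
  have := hbot _ hne'
  omega

theorem exists_add_of_eq_zero_on_window [AddZeroClass V] {k : ℕ} {δ : ℤ → V}
    (hδ : ∀ j : ℤ, j.natAbs ≤ k → δ j = 0) :
    ∃ u v, u ∈ SLeftStar (-(k : ℤ) - 1) ∧ v ∈ SRightStar ((k : ℤ) + 1) ∧ δ = u + v := by
  refine ⟨fun j => if j < -(k : ℤ) then δ j else 0, fun j => if (k : ℤ) < j then δ j else 0,
    fun j hj => if_neg (by omega), fun j hj => if_neg (by omega), funext fun j => ?_⟩
  by_cases hl : j < -(k : ℤ)
  · simp [hl, show ¬(k : ℤ) < j by omega]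
  by_cases hr : (k : ℤ) < j
  · simp [hl, hr]
  · simp [hl, hr, hδ j (by omega)]

end Configurations

section LaurentAct

variable {R : Type*} [Semiring R]

noncomputable def laurentAct (α : LaurentPolynomial R) (c : ℤ → R) : ℤ → R :=
  fun i => α.coeff.sum fun k v => v * c (i - k)

theorem laurentAct_sum_left {ι : Type*} (s : Finset ι) (f : ι → LaurentPolynomial R)
    (c : ℤ → R) (i : ℤ) : laurentAct (∑ x ∈ s, f x) c i = ∑ x ∈ s, laurentAct (f x) c i := by
  simp only [laurentAct, AddMonoidAlgebra.coeff_sum]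
  exact (Finsupp.sum_finsetSum_index (h := fun k v => v * c (i - k)) (fun _ => zero_mul _)
    fun _ _ _ => add_mul ..).symm

theorem laurentAct_sum_right {ι : Type*} (s : Finset ι) (α : LaurentPolynomial R)
    (f : ι → ℤ → R) (i : ℤ) :
    laurentAct α (fun j => ∑ b ∈ s, f b j) i = ∑ b ∈ s, laurentAct α (f b) i := by
  simp only [laurentAct, Finsupp.sum, Finset.mul_sum]
  exact Finset.sum_comm

theorem laurentAct_mul (α β : LaurentPolynomial R) (c : ℤ → R) (i : ℤ) :
    laurentAct (α * β) c i = laurentAct α (laurentAct β c) i := by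
  simp only [laurentAct, AddMonoidAlgebra.mul_def, AddMonoidAlgebra.coeff_finsuppSum,
    AddMonoidAlgebra.coeff_single]
  rw [Finsupp.sum_sum_index (fun _ => zero_mul _) fun _ _ _ => add_mul _ _ _]
  refine Finsupp.sum_congr fun k₁ _ => ?_
  rw [Finsupp.sum_sum_index (fun _ => zero_mul _) fun _ _ _ => add_mul _ _ _, Finsupp.mul_sum]
  refine Finsupp.sum_congr fun k₂ _ => ?_
  rw [Finsupp.sum_single_index (zero_mul _), mul_assoc, sub_sub]

end LaurentAct

section LCA

variable {m n : ℕ}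

theorem lcaFun_apply (A : Matrix (Fin n) (Fin n) (Lm m)) (c : ℤ → Fin n → ZMod m) (i : ℤ)
    (a : Fin n) : lcaFun A c i a = ∑ b, laurentAct (A a b) (fun j => c j b) i :=
  rfl

theorem lcaFun_add (A : Matrix (Fin n) (Fin n) (Lm m)) (c c' : ℤ → Fin n → ZMod m) :
    lcaFun A (c + c') = lcaFun A c + lcaFun A c' := by
  funext i a
  simp only [lcaFun, Finsupp.sum, Pi.add_apply, mul_add, Finset.sum_add_distrib]

noncomputable def lcaHom (A : Matrix (Fin n) (Fin n) (Lm m)) :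
    (ℤ → Fin n → ZMod m) →+ (ℤ → Fin n → ZMod m) :=
  AddMonoidHom.mk' (lcaFun A) (lcaFun_add A)

theorem coe_lcaHom (A : Matrix (Fin n) (Fin n) (Lm m)) : ⇑(lcaHom A) = lcaFun A :=
  rfl

theorem lcaFun_zero (A : Matrix (Fin n) (Fin n) (Lm m)) : lcaFun A 0 = 0 :=
  map_zero (lcaHom A)

theorem lcaFun_one (c : ℤ → Fin n → ZMod m) : lcaFun 1 c = c := by
  funext i a
  rw [lcaFun_apply, Finset.sum_eq_single a (fun b _ hb => ?_) (by simp), Matrix.one_apply_eq]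
  · simp only [laurentAct, AddMonoidAlgebra.one_def, AddMonoidAlgebra.coeff_single]
    rw [Finsupp.sum_single_index (zero_mul _), one_mul, sub_zero]
  · rw [Matrix.one_apply_ne' hb]
    exact Finsupp.sum_zero_index

theorem lcaFun_mul (A B : Matrix (Fin n) (Fin n) (Lm m)) (c : ℤ → Fin n → ZMod m) :
    lcaFun (A * B) c = lcaFun A (lcaFun B c) := by
  funext i a
  simp only [lcaFun_apply, Matrix.mul_apply, laurentAct_sum_left, laurentAct_mul,
    laurentAct_sum_right]
  exact Finset.sum_comm

theorem lcaFun_pow (A : Matrix (Fin n) (Fin n) (Lm m)) (ℓ : ℕ) :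
    lcaFun (A ^ ℓ) = (lcaFun A)^[ℓ] := by
  induction ℓ with
  | zero => exact funext lcaFun_one
  | succ ℓ ih => rw [pow_succ', Function.iterate_succ', ← ih]; exact funext (lcaFun_mul _ _)

theorem lcaFun_shift (A : Matrix (Fin n) (Fin n) (Lm m)) (c : ℤ → Fin n → ZMod m) (t : ℤ) :
    lcaFun A (fun j => c (j + t)) = fun i => lcaFun A c (i + t) := by
  funext i a
  refine Finset.sum_congr rfl fun b _ => Finsupp.sum_congr fun k _ => ?_
  show _ * c (i - k + t) b = _
  rw [sub_add_eq_add_sub]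

noncomputable def lcaRadius (A : Matrix (Fin n) (Fin n) (Lm m)) : ℕ :=
  Finset.univ.sup fun p : Fin n × Fin n => (A p.1 p.2).coeff.support.sup Int.natAbs

theorem natAbs_le_lcaRadius (A : Matrix (Fin n) (Fin n) (Lm m)) {a b : Fin n} {k : ℤ}
    (hk : k ∈ (A a b).coeff.support) : k.natAbs ≤ lcaRadius A :=
  (Finset.le_sup hk).trans (Finset.le_sup (f := fun p : Fin n × Fin n =>
    (A p.1 p.2).coeff.support.sup Int.natAbs) (Finset.mem_univ (a, b)))

theorem lcaFun_apply_congr (A : Matrix (Fin n) (Fin n) (Lm m)) {c c' : ℤ → Fin n → ZMod m}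
    {i : ℤ} (h : ∀ j, (i - j).natAbs ≤ lcaRadius A → c j = c' j) :
    lcaFun A c i = lcaFun A c' i := by
  funext a
  refine Finset.sum_congr rfl fun b _ => Finsupp.sum_congr fun k hk => ?_
  rw [h (i - k) (by simpa using natAbs_le_lcaRadius A hk)]

theorem lcaFun_mem_SLeftStar (A : Matrix (Fin n) (Fin n) (Lm m)) {c : ℤ → Fin n → ZMod m}
    {d : ℤ} (hc : c ∈ SLeftStar d) : lcaFun A c ∈ SLeftStar (d + lcaRadius A) := by
  intro i hi
  rw [lcaFun_apply_congr A (c' := 0) fun j hj => hc j (by omega), lcaFun_zero, Pi.zero_apply]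

theorem lcaFun_mem_SRightStar (A : Matrix (Fin n) (Fin n) (Lm m)) {c : ℤ → Fin n → ZMod m}
    {d : ℤ} (hc : c ∈ SRightStar d) : lcaFun A c ∈ SRightStar (d - lcaRadius A) := by
  intro i hi
  rw [lcaFun_apply_congr A (c' := 0) fun j hj => hc j (by omega), lcaFun_zero, Pi.zero_apply]

end LCA

section Orbits

variable {m n : ℕ} (A : Matrix (Fin n) (Fin n) (Lm m))

theorem orbit_mem_SLeftStar_and_SRightStar {k : ℕ} (hk : lcaRadius A ≤ k)
    {u v : ℤ → Fin n → ZMod m} (hu : u ∈ SLeftStar (-(k : ℤ) - 1))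
    (hv : v ∈ SRightStar ((k : ℤ) + 1))
    (hwin : ∀ (ℓ : ℕ) (j : ℤ), j.natAbs ≤ k → lcaFun (A ^ ℓ) (u + v) j = 0) (ℓ : ℕ) :
    lcaFun (A ^ ℓ) u ∈ SLeftStar (-(k : ℤ) - 1) ∧ lcaFun (A ^ ℓ) v ∈ SRightStar ((k : ℤ) + 1) := by
  induction ℓ with
  | zero => simpa only [pow_zero, lcaFun_one] using ⟨hu, hv⟩
  | succ ℓ ih =>
    -- One more step moves each half by at most the radius, so a leak of either half across
    -- the window boundary would land inside the window, where only the other half can cancel it.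
    have hu' := lcaFun_mem_SLeftStar A ih.1
    have hv' := lcaFun_mem_SRightStar A ih.2
    rw [← lcaFun_mul, ← pow_succ'] at hu' hv'
    have hsum : ∀ j : ℤ, j.natAbs ≤ k →
        lcaFun (A ^ (ℓ + 1)) u j + lcaFun (A ^ (ℓ + 1)) v j = 0 := fun j hj => by
      rw [← Pi.add_apply, ← lcaFun_add, hwin _ _ hj]
    constructor
    · intro j hj
      by_cases hjr : j ≤ -(k : ℤ) - 1 + lcaRadius A
      · simpa [hv' j (by omega)] using hsum j (by omega)
      · exact hu' j (by omega)
    · intro j hj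
      by_cases hjr : (k : ℤ) + 1 - lcaRadius A ≤ j
      · simpa [hu' j (by omega)] using hsum j (by omega)
      · exact hv' j (by omega)

theorem exists_SLeft_of_orbit_mem_SLeftStar {d : ℤ} (hd : d < 0) {u : ℤ → Fin n → ZMod m}
    (hne : u ≠ 0) (horb : ∀ ℓ : ℕ, lcaFun (A ^ ℓ) u ∈ SLeftStar d) :
    ∃ s : ℤ, 0 < s ∧ ∃ υ, υ ∈ SLeft (0 : ℤ) ∧ υ ≠ 0 ∧
      ∀ ℓ : ℕ, 0 < ℓ → lcaFun (A ^ ℓ) υ ∈ SLeftStar s := by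
  obtain ⟨t, htd, ht⟩ := exists_shift_mem_SLeft (by simpa [lcaFun_one] using horb 0) hne
  refine ⟨-t, by omega, _, ht, ne_zero_of_mem_SLeft ht, fun ℓ _ => ?_⟩
  rw [lcaFun_shift]
  exact SLeftStar_mono (by omega) (shift_mem_SLeftStar (horb ℓ) t)

theorem exists_SRight_of_orbit_mem_SRightStar {d : ℤ} (hd : 0 < d) {u : ℤ → Fin n → ZMod m}
    (hne : u ≠ 0) (horb : ∀ ℓ : ℕ, lcaFun (A ^ ℓ) u ∈ SRightStar d) :
    ∃ s : ℤ, 0 < s ∧ ∃ υ, υ ∈ SRight (0 : ℤ) ∧ υ ≠ 0 ∧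
      ∀ ℓ : ℕ, 0 < ℓ → lcaFun (A ^ ℓ) υ ∈ SRightStar (-s) := by
  obtain ⟨t, htd, ht⟩ := exists_shift_mem_SRight (by simpa [lcaFun_one] using horb 0) hne
  refine ⟨t, by omega, _, ht, ne_zero_of_mem_SRight ht, fun ℓ _ => ?_⟩
  rw [lcaFun_shift]
  exact SRightStar_mono (by omega) (shift_mem_SRightStar (horb ℓ) t)

theorem exists_orbit_eq_zero_on_window_of_SLeft {s : ℤ} (hs : 0 < s) {υ : ℤ → Fin n → ZMod m}
    (hυ : υ ∈ SLeft (0 : ℤ)) (horb : ∀ ℓ : ℕ, 0 < ℓ → lcaFun (A ^ ℓ) υ ∈ SLeftStar s) (M : ℕ) :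
    ∃ δ : ℤ → Fin n → ZMod m, δ ≠ 0 ∧
      ∀ (ℓ : ℕ) (j : ℤ), j.natAbs ≤ M → lcaFun (A ^ ℓ) δ j = 0 := by
  have horb' : ∀ ℓ : ℕ, lcaFun (A ^ ℓ) υ ∈ SLeftStar s := fun ℓ => by
    rcases Nat.eq_zero_or_pos ℓ with rfl | hℓ
    · simpa [lcaFun_one] using SLeftStar_mono hs.le hυ.1
    · exact horb ℓ hℓ
  refine ⟨fun j => υ (j + (s + M + 1)), fun h0 => hυ.2 ?_, fun ℓ j hj => ?_⟩
  · simpa only [neg_add_cancel, Pi.zero_apply] using congrFun h0 (-(s + M + 1))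
  · rw [lcaFun_shift]
    exact shift_mem_SLeftStar (horb' ℓ) _ j (by omega)

theorem exists_orbit_eq_zero_on_window_of_SRight {s : ℤ} (hs : 0 < s) {υ : ℤ → Fin n → ZMod m}
    (hυ : υ ∈ SRight (0 : ℤ)) (horb : ∀ ℓ : ℕ, 0 < ℓ → lcaFun (A ^ ℓ) υ ∈ SRightStar (-s))
    (M : ℕ) : ∃ δ : ℤ → Fin n → ZMod m, δ ≠ 0 ∧
      ∀ (ℓ : ℕ) (j : ℤ), j.natAbs ≤ M → lcaFun (A ^ ℓ) δ j = 0 := by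
  have horb' : ∀ ℓ : ℕ, lcaFun (A ^ ℓ) υ ∈ SRightStar (-s) := fun ℓ => by
    rcases Nat.eq_zero_or_pos ℓ with rfl | hℓ
    · simpa [lcaFun_one] using SRightStar_mono (by omega) hυ.1
    · exact horb ℓ hℓ
  refine ⟨fun j => υ (j + -(s + M + 1)), fun h0 => hυ.2 ?_, fun ℓ j hj => ?_⟩
  · simpa only [add_neg_cancel, Pi.zero_apply] using congrFun h0 (s + M + 1)
  · rw [lcaFun_shift]
    exact shift_mem_SRightStar (horb' ℓ) _ j (by omega)

end Orbits

theorem stmt1_general (m n : ℕ)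
    (F : (ℤ → Fin n → ZMod m) → (ℤ → Fin n → ZMod m))
    (A : Matrix (Fin n) (Fin n) (Lm m)) (hF : F = lcaFun A) :
    ¬ PosExpansive F ↔
      ∃ s : ℤ, 0 < s ∧
        ((∃ υ : ℤ → Fin n → ZMod m, υ ∈ SLeft (0 : ℤ) ∧ υ ≠ 0 ∧
            ∀ ℓ : ℕ, 0 < ℓ → lcaFun (A ^ ℓ) υ ∈ SLeftStar s) ∨
         (∃ υ : ℤ → Fin n → ZMod m, υ ∈ SRight (0 : ℤ) ∧ υ ≠ 0 ∧
            ∀ ℓ : ℕ, 0 < ℓ → lcaFun (A ^ ℓ) υ ∈ SRightStar (-s))) := by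
  rw [hF, ← coe_lcaHom, not_posExpansive_iff_exists_ne_zero]
  simp only [coe_lcaHom, ← lcaFun_pow]
  constructor
  · intro h
    obtain ⟨δ, hδ, hwin⟩ := h (lcaRadius A)
    obtain ⟨u, v, hu, hv, rfl⟩ :=
      exists_add_of_eq_zero_on_window fun j hj => by simpa [lcaFun_one] using hwin 0 j hj
    have horb := orbit_mem_SLeftStar_and_SRightStar A le_rfl hu hv hwin
    by_cases hu0 : u = 0
    · subst hu0
      obtain ⟨s, hs, hR⟩ := exists_SRight_of_orbit_mem_SRightStar A (by omega)
        (by simpa using hδ) fun ℓ => (horb ℓ).2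
      exact ⟨s, hs, Or.inr hR⟩
    · obtain ⟨s, hs, hL⟩ := exists_SLeft_of_orbit_mem_SLeftStar A (by omega) hu0
        fun ℓ => (horb ℓ).1
      exact ⟨s, hs, Or.inl hL⟩
  · rintro ⟨s, hs, ⟨υ, hυ, -, horb⟩ | ⟨υ, hυ, -, horb⟩⟩ M
    · exact exists_orbit_eq_zero_on_window_of_SLeft A hs hυ horb M
    · exact exists_orbit_eq_zero_on_window_of_SRight A hs hυ horb M

/-- an LCA `F` over `(ℤ/mℤ)ⁿ` with associated matrix `A` is NOT positively
expansive iff there is an integer `s > 0` such that either some nonzero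
`υ ∈ Left(𝕊ⁿ_m, 0)` has `Aˡυ ∈ Left*(𝕊ⁿ_m, s)` for all `ℓ > 0`, or some nonzero
`υ ∈ Right(𝕊ⁿ_m, 0)` has `Aˡυ ∈ Right*(𝕊ⁿ_m, -s)` for all `ℓ > 0`. -/
theorem stmt1 (m n : ℕ) (hm : 1 < m) (hn : 1 < n)
    (F : (ℤ → Fin n → ZMod m) → (ℤ → Fin n → ZMod m))
    (A : Matrix (Fin n) (Fin n) (Lm m)) (hF : F = lcaFun A) :
    ¬ PosExpansive F ↔
      ∃ s : ℤ, 0 < s ∧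
        ((∃ υ : ℤ → Fin n → ZMod m, υ ∈ SLeft (0 : ℤ) ∧ υ ≠ 0 ∧
            ∀ ℓ : ℕ, 0 < ℓ → lcaFun (A ^ ℓ) υ ∈ SLeftStar s) ∨
         (∃ υ : ℤ → Fin n → ZMod m, υ ∈ SRight (0 : ℤ) ∧ υ ≠ 0 ∧
            ∀ ℓ : ℕ, 0 < ℓ → lcaFun (A ^ ℓ) υ ∈ SRightStar (-s))) :=
  stmt1_general m n F A hF
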